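/- arXiv:2311.15039 — 4 statements merged into one kernel-verified Lean document; each statement's English description precedes it below -/
import Mathlib

section
/- Let G be a group generated by a finite set A, let π : (A ∪ A⁻¹)* → G be the canonical surjective monoid homomorphism from the free monoid over the alphabet consisting of the generators and their formal inverses, and let S ⊆ G be an algebraic subset of G. Then the subgroup ⟨S⟩ of G generated by S is also an algebraic subset of G. -/
/-!
Let `L` be a context-free language with `π(L) = S`. Swapping each letter with its formal inverse
and reversing words turns `L` into a context-free language `L'` with `π(L') = S⁻¹`, and
`π((L ∪ L')∗)` is the submonoid generated by `S ∪ S⁻¹`, which is `⟨S⟩`. So it suffices that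
context-free languages are closed under renaming letters, reversal, union and Kleene star.
For union and star, the hard inclusion is obtained by reading each nonterminal as a language and
checking that every rule maps the reading of its right-hand side into that of its left-hand side.
-/

/-- The canonical monoid homomorphism `π` from the free monoid over the alphabet
`X ⊕ X` (generators and their formal inverses) to a group `G`, induced by `f : X → G`:
a left letter `Sum.inl x` is sent to `f x` and a right (formal inverse) letter
`Sum.inr x` is sent to `(f x)⁻¹`. -/
def wordHom {X G : Type} [Group G] (f : X → G) : FreeMonoid (X ⊕ X) →* G :=
  FreeMonoid.lift (Sum.elim f fun x => (f x)⁻¹)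

/-- A subset `S ⊆ G` is algebraic (with respect to the generating map `f : X → G`)
if it is the image under the canonical homomorphism of a context-free language
over the alphabet of generators and formal inverses. -/
def IsAlgebraicSubset {X G : Type} [Group G] (f : X → G) (S : Set G) : Prop :=
  ∃ L : Language (X ⊕ X), L.IsContextFree ∧
    (fun w : List (X ⊕ X) => wordHom f (FreeMonoid.ofList w)) '' L = S

open scoped Computability Pointwise

namespace Symbol

variable {T T' T'' N N' N'' : Type*}

def map (φ : T → T') (ρ : N → N') : Symbol T N → Symbol T' N'
  | terminal t => terminal (φ t)
  | nonterminal n => nonterminal (ρ n)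

@[simp] lemma map_terminal (φ : T → T') (ρ : N → N') (t : T) :
    (terminal t).map φ ρ = terminal (φ t) := rfl

@[simp] lemma map_nonterminal (φ : T → T') (ρ : N → N') (n : N) :
    (nonterminal n).map φ ρ = nonterminal (ρ n) := rfl

@[simp] lemma map_map (φ : T → T') (ρ : N → N') (φ' : T' → T'') (ρ' : N' → N'')
    (s : Symbol T N) : (s.map φ ρ).map φ' ρ' = s.map (φ' ∘ φ) (ρ' ∘ ρ) := by
  cases s <;> rfl

@[simp] lemma map_id_id (s : Symbol T N) : s.map id id = s := by
  cases s <;> rfl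

end Symbol

namespace ContextFreeRule

variable {T T' T'' N N' N'' : Type*}

def map (φ : T → T') (ρ : N → N') (r : ContextFreeRule T N) : ContextFreeRule T' N' :=
  ⟨ρ r.input, r.output.map (Symbol.map φ ρ)⟩

@[simp] lemma map_map (φ : T → T') (ρ : N → N') (φ' : T' → T'') (ρ' : N' → N'')
    (r : ContextFreeRule T N) : (r.map φ ρ).map φ' ρ' = r.map (φ' ∘ φ) (ρ' ∘ ρ) := by
  simp [map, Function.comp_def]

@[simp] lemma map_id_id (r : ContextFreeRule T N) : r.map id id = r := by
  simp [map, show Symbol.map (id : T → T) (id : N → N) = id from funext Symbol.map_id_id]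

lemma Rewrites.map {r : ContextFreeRule T N} {u v : List (Symbol T N)} (h : r.Rewrites u v)
    (φ : T → T') (ρ : N → N') :
    (r.map φ ρ).Rewrites (u.map (Symbol.map φ ρ)) (v.map (Symbol.map φ ρ)) := by
  obtain ⟨p, q, rfl, rfl⟩ := h.exists_parts
  simpa [ContextFreeRule.map] using (r.map φ ρ).rewrites_of_exists_parts (p.map _) (q.map _)

end ContextFreeRule

namespace ContextFreeGrammar

variable {T T' : Type*}

theorem Derives.map {g : ContextFreeGrammar T} {g' : ContextFreeGrammar T'} (φ : T → T')
    (ρ : g.NT → g'.NT) (hg : ∀ r ∈ g.rules, r.map φ ρ ∈ g'.rules)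
    {u v : List (Symbol T g.NT)} (h : g.Derives u v) :
    g'.Derives (u.map (Symbol.map φ ρ)) (v.map (Symbol.map φ ρ)) := by
  induction h with
  | refl => rfl
  | tail _ step ih =>
    obtain ⟨r, hr, hrw⟩ := step
    exact ih.trans_produces ⟨_, hg r hr, hrw.map φ ρ⟩

theorem derives_map_of_mem_language {g : ContextFreeGrammar T} {g' : ContextFreeGrammar T'}
    (φ : T → T') (ρ : g.NT → g'.NT) (hg : ∀ r ∈ g.rules, r.map φ ρ ∈ g'.rules)
    {w : List T} (hw : w ∈ g.language) :
    g'.Derives [.nonterminal (ρ g.initial)] ((w.map φ).map .terminal) := by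
  simpa [Function.comp_def] using hw.map φ ρ hg

-- The grammar constructions are `abbrev`s so that the `Finset` membership lemmas, and the
-- `DecidableEq` instances they need, see through the new nonterminal type.
abbrev mapTerminals [DecidableEq T'] (g : ContextFreeGrammar T) [DecidableEq g.NT]
    (e : T ≃ T') : ContextFreeGrammar T' :=
  ⟨g.NT, g.initial, g.rules.image (ContextFreeRule.map e id)⟩

theorem language_mapTerminals [DecidableEq T'] (g : ContextFreeGrammar T) [DecidableEq g.NT]
    (e : T ≃ T') : (g.mapTerminals e).language = Language.map e g.language := by
  ext w
  constructor
  · intro hw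
    have hg : ∀ r ∈ (g.mapTerminals e).rules, r.map e.symm id ∈ g.rules := by
      intro r hr
      obtain ⟨r₀, hr₀, rfl⟩ := Finset.mem_image.mp hr
      simpa using hr₀
    exact ⟨w.map e.symm, (g.mem_language_iff _).2 (derives_map_of_mem_language e.symm id hg hw),
      by simp⟩
  · rintro ⟨w, hw, rfl⟩
    exact derives_map_of_mem_language (g' := g.mapTerminals e) e id
      (fun r hr => Finset.mem_image_of_mem _ hr) hw

end ContextFreeGrammar

namespace Symbol

variable {T N N' : Type*}

def interp (ν : N → Language T) : Symbol T N → Language T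
  | terminal t => {[t]}
  | nonterminal n => ν n

def interpList (ν : N → Language T) (s : List (Symbol T N)) : Language T :=
  (s.map (interp ν)).prod

variable (ν : N → Language T)

@[simp] lemma interpList_nil : interpList ν [] = 1 := rfl

@[simp] lemma interpList_cons (a : Symbol T N) (s : List (Symbol T N)) :
    interpList ν (a :: s) = a.interp ν * interpList ν s := by
  simp [interpList]

@[simp] lemma interpList_append (s s' : List (Symbol T N)) :
    interpList ν (s ++ s') = interpList ν s * interpList ν s' := by
  simp [interpList]

@[simp] lemma interpList_map_terminal (w : List T) :
    interpList ν (w.map terminal) = {w} := by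
  induction w with
  | nil => rfl
  | cons t w ih =>
    rw [List.map_cons, interpList_cons, ih]
    exact Set.image2_singleton

lemma interpList_map_nonterminal (ν : N' → Language T) (ρ : N → N') (s : List (Symbol T N)) :
    interpList ν (s.map (map id ρ)) = interpList (ν ∘ ρ) s := by
  induction s with
  | nil => rfl
  | cons a s ih => cases a <;> simp [ih, interp]

end Symbol

namespace ContextFreeGrammar

open Symbol

variable {T : Type*}

theorem Derives.interpList_le {g : ContextFreeGrammar T} {ν : g.NT → Language T}
    (hν : ∀ r ∈ g.rules, interpList ν r.output ≤ ν r.input)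
    {u v : List (Symbol T g.NT)} (h : g.Derives u v) : interpList ν v ≤ interpList ν u := by
  induction h with
  | refl => rfl
  | tail _ step ih =>
    obtain ⟨r, hr, hrw⟩ := step
    obtain ⟨p, q, rfl, rfl⟩ := hrw.exists_parts
    refine le_trans ?_ ih
    simp only [interpList_append, interpList_cons, interpList_nil, mul_one, interp]
    gcongr
    exact hν r hr

theorem language_le_of_interp {g : ContextFreeGrammar T} {ν : g.NT → Language T}
    (hν : ∀ r ∈ g.rules, interpList ν r.output ≤ ν r.input) : g.language ≤ ν g.initial := by
  intro w hw
  have hw' : w ∈ interpList ν (w.map terminal) := by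
    rw [interpList_map_terminal]
    exact Set.mem_singleton w
  simpa [interp] using hw.interpList_le hν hw'

def languageFrom (g : ContextFreeGrammar T) (n : g.NT) : Language T :=
  {w | g.Derives [.nonterminal n] (w.map .terminal)}

@[simp] lemma languageFrom_initial (g : ContextFreeGrammar T) :
    g.languageFrom g.initial = g.language := rfl

theorem interpList_languageFrom_le (g : ContextFreeGrammar T) (s : List (Symbol T g.NT)) :
    interpList g.languageFrom s ≤ {w | g.Derives s (w.map .terminal)} := by
  induction s with
  | nil =>
    rintro w rfl
    exact Derives.refl []
  | cons a s ih =>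
    rintro _ ⟨w₁, hw₁, w₂, hw₂, rfl⟩
    have ha : g.Derives [a] (w₁.map .terminal) := by
      cases a with
      | terminal t => obtain rfl := hw₁; rfl
      | nonterminal n => exact hw₁
    simpa using (ha.append_right s).trans ((ih hw₂).append_left _)

theorem interpList_languageFrom_output_le (g : ContextFreeGrammar T) {r : ContextFreeRule T g.NT}
    (hr : r ∈ g.rules) : interpList g.languageFrom r.output ≤ g.languageFrom r.input :=
  fun _ hw => (Produces.single ⟨r, hr, .input_output⟩).trans (g.interpList_languageFrom_le _ hw)

theorem interpList_map_output_le {g : ContextFreeGrammar T} {N : Type*} {ν : N → Language T}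
    {ρ : g.NT → N} (hν : ν ∘ ρ = g.languageFrom) {r : ContextFreeRule T g.NT} (hr : r ∈ g.rules) :
    interpList ν (r.map id ρ).output ≤ ν (r.map id ρ).input := by
  show interpList ν (r.output.map (Symbol.map id ρ)) ≤ (ν ∘ ρ) r.input
  rw [interpList_map_nonterminal, hν]
  exact g.interpList_languageFrom_output_le hr

variable [DecidableEq T]

abbrev union (g₁ g₂ : ContextFreeGrammar T) [DecidableEq g₁.NT] [DecidableEq g₂.NT] :
    ContextFreeGrammar T where
  NT := Option (g₁.NT ⊕ g₂.NT)
  initial := none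
  rules := insert ⟨none, [.nonterminal (some (.inl g₁.initial))]⟩ <|
    insert ⟨none, [.nonterminal (some (.inr g₂.initial))]⟩ <|
      g₁.rules.image (.map id (some ∘ .inl)) ∪ g₂.rules.image (.map id (some ∘ .inr))

theorem language_union (g₁ g₂ : ContextFreeGrammar T) [DecidableEq g₁.NT] [DecidableEq g₂.NT] :
    (g₁.union g₂).language = g₁.language + g₂.language := by
  apply le_antisymm
  · let ν : (g₁.union g₂).NT → Language T :=
      fun n => n.elim (g₁.language + g₂.language) (Sum.elim g₁.languageFrom g₂.languageFrom)
    refine language_le_of_interp (ν := ν) fun r hr => ?_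
    simp only [Finset.mem_insert, Finset.mem_union, Finset.mem_image] at hr
    rcases hr with rfl | rfl | ⟨r, hr, rfl⟩ | ⟨r, hr, rfl⟩
    · simp [interp, ν]
    · simp [interp, ν]
    · exact interpList_map_output_le (ν := ν) (ρ := some ∘ .inl) rfl hr
    · exact interpList_map_output_le (ν := ν) (ρ := some ∘ .inr) rfl hr
  · rintro w (hw | hw)
    · refine Produces.trans_derives ⟨_, Finset.mem_insert_self _ _, .input_output⟩ ?_
      simpa using derives_map_of_mem_language (g' := g₁.union g₂) id (some ∘ .inl)
        (fun r hr => Finset.mem_insert_of_mem <| Finset.mem_insert_of_mem <|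
          Finset.mem_union_left _ <| Finset.mem_image_of_mem _ hr) hw
    · refine Produces.trans_derives
        ⟨_, Finset.mem_insert_of_mem (Finset.mem_insert_self _ _), .input_output⟩ ?_
      simpa using derives_map_of_mem_language (g' := g₁.union g₂) id (some ∘ .inr)
        (fun r hr => Finset.mem_insert_of_mem <| Finset.mem_insert_of_mem <|
          Finset.mem_union_right _ <| Finset.mem_image_of_mem _ hr) hw

abbrev kstar (g : ContextFreeGrammar T) [DecidableEq g.NT] : ContextFreeGrammar T where
  NT := Option g.NT
  initial := none
  rules := insert ⟨none, []⟩ <|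
    insert ⟨none, [.nonterminal (some g.initial), .nonterminal none]⟩ <|
      g.rules.image (.map id some)

theorem language_kstar (g : ContextFreeGrammar T) [DecidableEq g.NT] :
    g.kstar.language = g.language∗ := by
  apply le_antisymm
  · let ν : g.kstar.NT → Language T := fun n => n.elim (g.language∗) g.languageFrom
    refine language_le_of_interp (ν := ν) fun r hr => ?_
    simp only [Finset.mem_insert, Finset.mem_image] at hr
    rcases hr with rfl | rfl | ⟨r, hr, rfl⟩
    · exact one_le_kstar
    · simpa [interp, ν] using mul_kstar_le_kstar (a := g.language)
    · exact interpList_map_output_le (ν := ν) (ρ := some) rfl hr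
  · rintro _ ⟨ws, rfl, hws⟩
    induction ws with
    | nil => exact Produces.single ⟨_, Finset.mem_insert_self _ _, .input_output⟩
    | cons w ws ih =>
      have hw : g.kstar.Derives [.nonterminal (some g.initial)] (w.map .terminal) := by
        simpa using derives_map_of_mem_language (g' := g.kstar) id some
          (fun r hr => Finset.mem_insert_of_mem <| Finset.mem_insert_of_mem <|
            Finset.mem_image_of_mem _ hr) (hws w List.mem_cons_self)
      have hws' := ih fun y hy => hws y (List.mem_cons_of_mem _ hy)
      refine Produces.trans_derives
        ⟨_, Finset.mem_insert_of_mem (Finset.mem_insert_self _ _), .input_output⟩ ?_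
      simpa using (hw.append_right _).trans (hws'.append_left _)

end ContextFreeGrammar

namespace Language

variable {T : Type*} {L L₁ L₂ : Language T}

theorem IsContextFree.map_equiv {T' : Type*} (h : L.IsContextFree) (e : T ≃ T') :
    (Language.map e L).IsContextFree := by
  classical
  obtain ⟨g, rfl⟩ := h
  exact ⟨g.mapTerminals e, g.language_mapTerminals e⟩

theorem IsContextFree.add (h₁ : L₁.IsContextFree) (h₂ : L₂.IsContextFree) :
    (L₁ + L₂).IsContextFree := by
  classical
  obtain ⟨g₁, rfl⟩ := h₁
  obtain ⟨g₂, rfl⟩ := h₂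
  exact ⟨g₁.union g₂, g₁.language_union g₂⟩

theorem IsContextFree.kstar (h : L.IsContextFree) : (L∗).IsContextFree := by
  classical
  obtain ⟨g, rfl⟩ := h
  exact ⟨g.kstar, g.language_kstar⟩

end Language

theorem MonoidHom.image_kstar_eq_closure {α M : Type*} [Monoid M] (φ : FreeMonoid α →* M)
    (L : Language α) :
    (fun w => φ (FreeMonoid.ofList w)) '' (L∗ : Language α) =
      Submonoid.closure ((fun w => φ (FreeMonoid.ofList w)) '' L) := by
  apply Set.Subset.antisymm
  · rintro _ ⟨_, ⟨ws, rfl, hws⟩, rfl⟩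
    dsimp only
    rw [FreeMonoid.ofList_flatten, map_list_prod, List.map_map]
    exact Submonoid.list_prod_mem _ fun x hx => by
      obtain ⟨w, hw, rfl⟩ := List.mem_map.mp hx
      exact Submonoid.subset_closure ⟨w, hws w hw, rfl⟩
  · intro x hx
    induction hx using Submonoid.closure_induction with
    | mem x hx =>
      obtain ⟨w, hw, rfl⟩ := hx
      exact ⟨w, (le_kstar : L ≤ L∗) hw, rfl⟩
    | one => exact ⟨[], Language.nil_mem_kstar L, map_one φ⟩
    | mul x y _ _ hx hy =>
      obtain ⟨u, hu, rfl⟩ := hx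
      obtain ⟨v, hv, rfl⟩ := hy
      exact ⟨u ++ v, kstar_mul_kstar L ▸ Language.append_mem_mul hu hv, by simp⟩

theorem wordHom_ofList_reverse_map_swap {X G : Type} [Group G] (f : X → G) (w : List (X ⊕ X)) :
    wordHom f (.ofList (w.map Sum.swap).reverse) = (wordHom f (.ofList w))⁻¹ := by
  induction w with
  | nil => simp
  | cons a w ih =>
    rcases a with x | x <;> simp [wordHom, FreeMonoid.ofList_cons] at ih ⊢ <;> rw [ih]

theorem image_wordHom_reverse_map_swap {X G : Type} [Group G] (f : X → G)
    (L : Language (X ⊕ X)) :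
    (fun w => wordHom f (.ofList w)) '' (Language.map Sum.swap L).reverse =
      ((fun w => wordHom f (.ofList w)) '' L)⁻¹ := by
  ext x
  constructor
  · rintro ⟨w, ⟨u, hu, hw⟩, rfl⟩
    refine ⟨u, hu, ?_⟩
    dsimp only
    rw [← List.reverse_reverse w, ← hw, wordHom_ofList_reverse_map_swap, inv_inv]
  · rintro ⟨u, hu, hux⟩
    refine ⟨(u.map Sum.swap).reverse, ⟨u, hu, (List.reverse_reverse _).symm⟩, ?_⟩
    dsimp only at hux ⊢
    rw [wordHom_ofList_reverse_map_swap, hux, inv_inv]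

theorem subgroup_closure_isAlgebraic_general {X G : Type} [Group G] (f : X → G)
    (S : Set G) (hS : IsAlgebraicSubset f S) :
    IsAlgebraicSubset f ((Subgroup.closure S : Subgroup G) : Set G) := by
  obtain ⟨L, hL, rfl⟩ := hS
  set π : List (X ⊕ X) → G := fun w => wordHom f (.ofList w)
  set L' := (Language.map Sum.swap L).reverse
  have hL' : L'.IsContextFree := .reverse (.map_equiv hL (Equiv.sumComm X X))
  have hπ : π '' (L + L') = π '' L ∪ (π '' L)⁻¹ := by
    rw [← image_wordHom_reverse_map_swap]
    exact Set.image_union π L L'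
  refine ⟨(L + L')∗, .kstar (.add hL hL'), ?_⟩
  rw [MonoidHom.image_kstar_eq_closure, hπ, ← Subgroup.closure_toSubmonoid]
  rfl

/-- If `S` is an algebraic subset of a group `G` generated by a finite set,
then the subgroup generated by `S` is also algebraic. -/
theorem subgroup_closure_isAlgebraic {X G : Type} [Fintype X] [Group G] (f : X → G)
    (hgen : Subgroup.closure (Set.range f) = ⊤)
    (S : Set G) (hS : IsAlgebraicSubset f S) :
    IsAlgebraicSubset f ((Subgroup.closure S : Subgroup G) : Set G) :=
  subgroup_closure_isAlgebraic_general f S hS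
end

section
/- Let G be a group generated by a finite set A, let π : (A ∪ A⁻¹)* → G be the canonical surjective monoid homomorphism, and let H be a subgroup of G. Then H is a rational subset of G if and only if H is finitely generated as a group. -/
/-- A subset `K ⊆ G` is rational (with respect to the generating map `f : X → G`)
if it is the image under the canonical homomorphism of a regular language
over the alphabet of generators and formal inverses. -/
def IsRationalSubset {X G : Type} [Group G] (f : X → G) (K : Set G) : Prop :=
  ∃ L : Language (X ⊕ X), L.IsRegular ∧
    (fun w : List (X ⊕ X) => wordHom f (FreeMonoid.ofList w)) '' L = K

open scoped Computability

namespace Language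

variable {α : Type*} {W : Language α}

theorem append_mem_kstar {u v : List α} (hu : u ∈ W∗) (hv : v ∈ W∗) : u ++ v ∈ W∗ := by
  rw [← kstar_mul_kstar W]
  exact ⟨u, hu, v, hv, rfl⟩

theorem exists_suffix_of_append_mem_kstar {u v : List α} (h : u ++ v ∈ W∗) :
    ∃ s, (s = [] ∨ ∃ w ∈ W, s <:+ w) ∧ u ++ s ∈ W∗ ∧ ∃ t ∈ W∗, v = s ++ t := by
  obtain ⟨l, huv, hl⟩ := mem_kstar.1 h
  clear h
  induction l generalizing u with
  | nil =>
    obtain ⟨rfl, rfl⟩ := List.append_eq_nil_iff.1 huv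
    exact ⟨[], Or.inl rfl, nil_mem_kstar W, [], nil_mem_kstar W, rfl⟩
  | cons w l ih =>
    have hw : w ∈ W := hl w List.mem_cons_self
    have hl' : ∀ y ∈ l, y ∈ W := fun y hy => hl y (List.mem_cons_of_mem w hy)
    rw [List.flatten_cons, List.append_eq_append_iff] at huv
    rcases huv with ⟨s, rfl, rfl⟩ | ⟨c, rfl, hc⟩
    · exact ⟨s, Or.inr ⟨_, hw, List.suffix_append u s⟩, (le_kstar : W ≤ W∗) hw,
        _, join_mem_kstar hl', rfl⟩
    · obtain ⟨s, hs, hcs, ht⟩ := ih hc.symm hl'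
      refine ⟨s, hs, ?_, ht⟩
      rw [List.append_assoc]
      exact append_mem_kstar ((le_kstar : W ≤ W∗) hw) hcs

theorem leftQuotient_kstar (u : List α) :
    (W∗).leftQuotient u =
      {v | ∃ s ∈ {s | (s = [] ∨ ∃ w ∈ W, s <:+ w) ∧ u ++ s ∈ W∗}, ∃ t ∈ W∗, v = s ++ t} := by
  ext v
  constructor
  · intro h
    obtain ⟨s, hs, hus, ht⟩ := exists_suffix_of_append_mem_kstar h
    exact ⟨s, ⟨hs, hus⟩, ht⟩
  · rintro ⟨s, ⟨-, hus⟩, t, ht, rfl⟩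
    rw [mem_leftQuotient, ← List.append_assoc]
    exact append_mem_kstar hus ht

theorem isRegular_kstar_of_finite (hW : W.Finite) : (W∗).IsRegular := by
  set D : Set (List α) := {s | s = [] ∨ ∃ w ∈ W, s <:+ w}
  have hD : D.Finite := by
    refine ((Set.finite_singleton []).union (hW.biUnion fun w _ => w.tails.finite_toSet)).subset ?_
    rintro s (rfl | ⟨w, hw, hs⟩)
    · exact Or.inl rfl
    · exact Or.inr (Set.mem_biUnion hw ((List.mem_tails s w).2 hs))
  refine IsRegular.of_finite_range_leftQuotient <|
    ((hD.finite_subsets).image fun P => {v | ∃ s ∈ P, ∃ t ∈ W∗, v = s ++ t}).subset ?_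
  rintro _ ⟨u, rfl⟩
  exact ⟨_, fun s hs => hs.1, (leftQuotient_kstar u).symm⟩

end Language

section

variable {α : Type*}

theorem FreeMonoid.image_kstar {M : Type*} [Monoid M] (φ : FreeMonoid α →* M) (W : Language α) :
    (fun w => φ (FreeMonoid.ofList w)) '' (W∗ : Language α) =
      Submonoid.closure ((fun w => φ (FreeMonoid.ofList w)) '' W) := by
  ext g
  constructor
  · rintro ⟨_, hw, rfl⟩
    obtain ⟨l, rfl, hl⟩ := Language.mem_kstar.1 hw
    show φ (FreeMonoid.ofList l.flatten) ∈ _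
    rw [FreeMonoid.ofList_flatten, map_list_prod, List.map_map]
    exact Submonoid.list_prod_mem _ fun g hg => by
      obtain ⟨w, hw, rfl⟩ := List.mem_map.1 hg
      exact Submonoid.subset_closure ⟨w, hl w hw, rfl⟩
  · intro hg
    induction hg using Submonoid.closure_induction with
    | mem g hg => exact Set.image_mono (le_kstar : W ≤ W∗) hg
    | one => exact ⟨[], Language.nil_mem_kstar W, map_one φ⟩
    | mul g h _ _ hg hh =>
      obtain ⟨u, hu, rfl⟩ := hg
      obtain ⟨v, hv, rfl⟩ := hh
      exact ⟨u ++ v, Language.append_mem_kstar hu hv, map_mul φ _ _⟩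

theorem Subgroup.exists_isRegular_image_eq_of_fg {G : Type*} [Group G] {φ : FreeMonoid α →* G}
    (hφ : Function.Surjective φ) {H : Subgroup G} (hH : H.FG) :
    ∃ L : Language α, L.IsRegular ∧ (fun w => φ (FreeMonoid.ofList w)) '' L = H := by
  obtain ⟨T, rfl, hT⟩ := (Subgroup.fg_iff H).1 hH
  obtain ⟨W, hW, hWT⟩ : ∃ W : Language α, W.Finite ∧
      (fun w => φ (FreeMonoid.ofList w)) '' W = T ∪ T⁻¹ := by
    refine ⟨(fun g => FreeMonoid.toList (Function.surjInv hφ g)) '' (T ∪ T⁻¹),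
      (hT.union hT.inv).image _, ?_⟩
    simp [Set.image_image, Function.surjInv_eq hφ]
  refine ⟨W∗, Language.isRegular_kstar_of_finite hW, ?_⟩
  rw [FreeMonoid.image_kstar, hWT, ← Subgroup.closure_toSubmonoid]
  rfl

end

namespace DFA

variable {α σ G : Type*} {M : DFA α σ}

theorem append_mem_accepts_iff_of_eval_eq {u u' : List α} (h : M.eval u = M.eval u') (v : List α) :
    u ++ v ∈ M.accepts ↔ u' ++ v ∈ M.accepts := by
  rw [← Language.mem_leftQuotient, Language.leftQuotient_accepts_apply, h,
    ← Language.leftQuotient_accepts_apply, Language.mem_leftQuotient]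

theorem mul_inv_mem_of_eval_eq [Group G] {φ : FreeMonoid α →* G} {H : Subgroup G}
    (hH : ∀ w ∈ M.accepts, φ (FreeMonoid.ofList w) ∈ H)
    {u u' v : List α} (h : M.eval u = M.eval u') (hv : u ++ v ∈ M.accepts) :
    φ (FreeMonoid.ofList u) * (φ (FreeMonoid.ofList u'))⁻¹ ∈ H := by
  have hv' := (append_mem_accepts_iff_of_eval_eq h v).1 hv
  simpa [FreeMonoid.ofList_append, mul_assoc] using H.mul_mem (hH _ hv) (H.inv_mem (hH _ hv'))

end DFA

theorem Subgroup.fg_of_image_accepts {α σ G : Type*} [Finite α] [Finite σ] [Group G]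
    (M : DFA α σ) {φ : FreeMonoid α →* G} {H : Subgroup G}
    (hH : (fun w => φ (FreeMonoid.ofList w)) '' M.accepts = H) : H.FG := by
  set ψ : List α → G := fun w => φ (FreeMonoid.ofList w)
  have mem : ∀ w ∈ M.accepts, ψ w ∈ H := fun w hw => by
    rw [← SetLike.mem_coe, ← hH]
    exact Set.mem_image_of_mem ψ hw
  set rep : σ → List α := Function.invFun M.eval
  have eval_rep : ∀ u, M.eval (rep (M.eval u)) = M.eval u := fun u => Function.invFun_eq ⟨u, rfl⟩
  set F : Set G := Set.range (fun q => ψ (rep q)) ∪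
    Set.range (fun p : σ × α => ψ (rep p.1 ++ [p.2]) * (ψ (rep (M.step p.1 p.2)))⁻¹)
  have gen_mem : ∀ g ∈ F, g ∈ H → g ∈ closure (F ∩ H) := fun _ hgF hgH =>
    subset_closure ⟨hgF, hgH⟩
  have telescope : ∀ u v, u ++ v ∈ M.accepts → ψ u * (ψ (rep (M.eval u)))⁻¹ ∈ closure (F ∩ H) := by
    intro u
    induction u using List.reverseRecOn with
    | nil =>
      intro v hv
      have := DFA.mul_inv_mem_of_eval_eq mem (eval_rep []).symm hv
      simp only [ψ, FreeMonoid.ofList_nil, map_one, one_mul, inv_mem_iff] at this ⊢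
      exact gen_mem _ (Or.inl ⟨_, rfl⟩) this
    | append_singleton u a ih =>
      intro v hv
      have h_step : M.eval (rep (M.eval u) ++ [a]) = M.eval (u ++ [a]) := by
        rw [DFA.eval_append_singleton, DFA.eval_append_singleton, eval_rep]
      have hgen := gen_mem _
        (Or.inr ⟨(M.eval u, a), by simp only [ψ, DFA.eval_append_singleton]⟩)
        (DFA.mul_inv_mem_of_eval_eq mem (h_step.trans (eval_rep _).symm)
          ((DFA.append_mem_accepts_iff_of_eval_eq h_step v).2 hv))
      convert mul_mem (ih (a :: v) (by simpa using hv)) hgen using 1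
      simp only [ψ, FreeMonoid.ofList_append, map_mul]
      group
  refine (fg_iff H).2 ⟨F ∩ H, le_antisymm ((closure_le H).2 Set.inter_subset_right) ?_,
    ((Set.finite_range _).union (Set.finite_range _)).inter_of_left _⟩
  intro g hg
  obtain ⟨w, hw, rfl⟩ : g ∈ ψ '' M.accepts := by rw [hH]; exact hg
  have hrep : ψ (rep (M.eval w)) ∈ H := mem _ ((M.mem_accepts).2 ((eval_rep w).symm ▸ hw))
  simpa using mul_mem (telescope w [] (by rwa [List.append_nil])) (gen_mem _ (Or.inl ⟨_, rfl⟩) hrep)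

theorem wordHom_surjective {X G : Type} [Group G] {f : X → G}
    (hgen : Subgroup.closure (Set.range f) = ⊤) : Function.Surjective (wordHom f) := by
  rw [← MonoidHom.mrange_eq_top, wordHom, FreeMonoid.mrange_lift, Set.Sum.elim_range,
    ← Subgroup.top_toSubmonoid, ← hgen, Subgroup.closure_toSubmonoid]
  congr
  ext g
  simp [inv_eq_iff_eq_inv]

/-- A subgroup `H` of a group `G` generated by a finite set is a rational subset
of `G` if and only if `H` is finitely generated. -/
theorem isRationalSubset_iff_fg {X G : Type} [Fintype X] [Group G] (f : X → G)
    (hgen : Subgroup.closure (Set.range f) = ⊤)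
    (H : Subgroup G) :
    IsRationalSubset f (H : Set G) ↔ H.FG := by
  constructor
  · rintro ⟨L, ⟨σ, _, M, rfl⟩, hM⟩
    exact Subgroup.fg_of_image_accepts M hM
  · exact Subgroup.exists_isRegular_image_eq_of_fg (wordHom_surjective hgen)
end

section
/- Let m ≥ 1 and let BS(1, m) = ⟨a, t ∣ t⁻¹ a t = aᵐ⟩. Then the normal closure N of a in BS(1, m) is an algebraic subset of BS(1, m). -/
/-- The single relator `t⁻¹ a t a⁻ᵐ` of the Baumslag–Solitar group `BS(1, m)`,
where `a = FreeGroup.of true` and `t = FreeGroup.of false`. -/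
def BSRels (m : ℕ) : Set (FreeGroup Bool) :=
  {(FreeGroup.of false)⁻¹ * FreeGroup.of true * FreeGroup.of false *
    (FreeGroup.of true ^ m)⁻¹}

/-- The Baumslag–Solitar group `BS(1, m) = ⟨a, t ∣ t⁻¹ a t = aᵐ⟩`, presented as the
quotient of the free group on two generators by the normal closure of `t⁻¹ a t a⁻ᵐ`. -/
def BS (m : ℕ) : Type := PresentedGroup (BSRels m)

instance (m : ℕ) : Group (BS m) := by unfold BS; infer_instance

/-!
The normal closure `N` of `a` is the kernel of the homomorphism `BS(1, m) → ℤ` recording the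
exponent sum of `t`: modulo `N` the group is cyclic, generated by `t`. So a word represents an
element of `N` exactly when its letters `t^{±1}` balance, and words over letters of weight
`-1, 0, 1` with total weight `0` form a context-free language, generated by
`S → ε | x S | x S y S` (with `x`, `y` of opposite weights in the last rule).
-/

open Symbol

namespace List

variable {α : Type*} {d : α → ℤ}

theorem exists_eq_append_cons_of_sum_map_lt (hd : ∀ x, -1 ≤ d x) :
    ∀ {w : List α} {k : ℤ}, 0 ≤ k → (w.map d).sum < -k →
      ∃ w₁ y w₂, w = w₁ ++ y :: w₂ ∧ (w₁.map d).sum = -k ∧ d y = -1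
  | [], k, hk, hw => by simp at hw; omega
  | x :: v, k, hk, hw => by
    rw [map_cons, sum_cons] at hw
    by_cases hstop : k = 0 ∧ d x = -1
    · exact ⟨[], x, v, rfl, by simp [hstop.1], hstop.2⟩
    · obtain ⟨w₁, y, w₂, rfl, hw₁, hy⟩ :=
        exists_eq_append_cons_of_sum_map_lt hd (w := v) (k := k + d x)
          (by have := hd x; omega) (by omega)
      exact ⟨x :: w₁, y, w₂, rfl, by simp [hw₁], hy⟩

theorem exists_matching_of_sum_map_cons_eq_zero (hd : ∀ x, |d x| ≤ 1) {x : α} {v : List α}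
    (hx : d x ≠ 0) (hxv : ((x :: v).map d).sum = 0) :
    ∃ v₁ y v₂, v = v₁ ++ y :: v₂ ∧ (v₁.map d).sum = 0 ∧ (v₂.map d).sum = 0 ∧ d x + d y = 0 := by
  have hsign : d x = 1 ∨ d x = -1 := by have := abs_le.mp (hd x); omega
  rw [map_cons, sum_cons] at hxv
  -- rescaling by the sign of `d x` makes `v` sum to `-1`
  obtain ⟨v₁, y, v₂, rfl, hv₁, hy⟩ := exists_eq_append_cons_of_sum_map_lt
    (d := fun z => d x * d z) (w := v) (k := 0)
    (fun z => by have := abs_le.mp (hd z); rcases hsign with h | h <;> simp [h] <;> omega)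
    le_rfl (by rw [sum_map_mul_left]; rcases hsign with h | h <;> simp [h] <;> omega)
  rw [sum_map_mul_left] at hv₁
  simp only [map_append, map_cons, sum_append, sum_cons] at hxv
  refine ⟨v₁, y, v₂, rfl, ?_, ?_, ?_⟩ <;> rcases hsign with h | h <;>
    simp [h] at hv₁ hy <;> omega

end List

namespace ContextFreeGrammar

open Finset

variable {α : Type*}

/-- The rules `S → ε`, `S → x S` for `d x = 0`, and `S → x S y S` for `d x + d y = 0`. -/
def balancedRules [Fintype α] [DecidableEq α] (d : α → ℤ) : Finset (ContextFreeRule α Unit) :=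
  insert ⟨(), []⟩
    (((univ.filter (d · = 0)).image fun x => ⟨(), [terminal x, nonterminal ()]⟩) ∪
      ((univ ×ˢ univ).filter (fun p : α × α => d p.1 + d p.2 = 0)).image
        fun p => ⟨(), [terminal p.1, nonterminal (), terminal p.2, nonterminal ()]⟩)

abbrev balanced [Fintype α] [DecidableEq α] (d : α → ℤ) : ContextFreeGrammar α :=
  ⟨Unit, (), balancedRules d⟩

def symbolWeight {N : Type*} (d : α → ℤ) : Symbol α N → ℤ
  | terminal x => d x
  | nonterminal _ => 0

variable [Fintype α] [DecidableEq α] {d : α → ℤ}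

theorem sum_map_symbolWeight_output {r : ContextFreeRule α Unit} (hr : r ∈ balancedRules d) :
    (r.output.map (symbolWeight d)).sum = 0 := by
  simp only [balancedRules, mem_insert, mem_union, mem_image, mem_filter, mem_univ, true_and,
    mem_product] at hr
  rcases hr with rfl | ⟨x, hx, rfl⟩ | ⟨⟨x, y⟩, hxy, rfl⟩ <;> simp [symbolWeight, *]

theorem sum_map_symbolWeight_eq_of_derives {u v : List (Symbol α Unit)}
    (h : (balanced d).Derives u v) :
    (v.map (symbolWeight d)).sum = (u.map (symbolWeight d)).sum := by
  induction h with
  | refl => rfl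
  | tail _ hstep ih =>
    obtain ⟨r, hr, hrw⟩ := hstep
    obtain ⟨p, q, rfl, rfl⟩ := hrw.exists_parts
    simp only [List.map_append, List.sum_append, sum_map_symbolWeight_output hr] at ih ⊢
    simpa [symbolWeight] using ih

theorem derives_of_sum_map_eq_zero (hd : ∀ x, |d x| ≤ 1) :
    ∀ w : List α, (w.map d).sum = 0 → (balanced d).Derives [nonterminal ()] (w.map terminal)
  | [], _ => .single ⟨_, mem_insert_self _ _, .input_output⟩
  | x :: v, hxv => by
    by_cases hx : d x = 0
    · have hrule : ⟨(), [terminal x, nonterminal ()]⟩ ∈ balancedRules d := by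
        simp [balancedRules, hx]
      have hv := derives_of_sum_map_eq_zero hd v (by simpa [hx] using hxv)
      exact Produces.trans_derives ⟨_, hrule, .input_output⟩
        (by simpa using hv.append_left [terminal x])
    · obtain ⟨v₁, y, v₂, hv, hv₁, hv₂, hxy⟩ :=
        List.exists_matching_of_sum_map_cons_eq_zero hd hx hxv
      have hrule : ⟨(), [terminal x, nonterminal (), terminal y, nonterminal ()]⟩ ∈
          balancedRules d := by
        simp [balancedRules, hxy]
      have h₁ := derives_of_sum_map_eq_zero hd v₁ hv₁
      have h₂ := derives_of_sum_map_eq_zero hd v₂ hv₂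
      subst hv
      have hrest : (balanced d).Derives [nonterminal (), terminal y, nonterminal ()]
          (v₁.map terminal ++ terminal y :: v₂.map terminal) :=
        (h₁.append_right _).trans ((h₂.append_left [terminal y]).append_left _)
      exact Produces.trans_derives ⟨_, hrule, .input_output⟩
        (by simpa using hrest.append_left [terminal x])
termination_by w => w.length
decreasing_by all_goals simp_all <;> omega

theorem mem_balanced_language_iff (hd : ∀ x, |d x| ≤ 1) (w : List α) :
    w ∈ (balanced d).language ↔ (w.map d).sum = 0 := by
  refine ⟨fun hw => ?_, derives_of_sum_map_eq_zero hd w⟩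
  simpa [symbolWeight, Function.comp_def] using sum_map_symbolWeight_eq_of_derives hw

end ContextFreeGrammar

theorem Language.isContextFree_setOf_sum_map_eq_zero {α : Type*} [Finite α] {d : α → ℤ}
    (hd : ∀ x, |d x| ≤ 1) : Language.IsContextFree ({w | (w.map d).sum = 0} : Set (List α)) := by
  have := Fintype.ofFinite α
  classical
  exact ⟨.balanced d, Set.ext (ContextFreeGrammar.mem_balanced_language_iff hd)⟩

theorem MonoidHom.ker_eq_normalClosure {G : Type*} [Group G] {S : Set G} {t : G}
    (hgen : Subgroup.closure (insert t S) = ⊤) (φ : G →* Multiplicative ℤ)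
    (hS : ∀ s ∈ S, φ s = 1) (ht : φ t = .ofAdd 1) : φ.ker = Subgroup.normalClosure S := by
  set N := Subgroup.normalClosure S
  refine le_antisymm ?_ (Subgroup.normalClosure_le_normal hS)
  -- modulo `N` the group is cyclic generated by `t`, and `φ` counts the power of `t`
  have hfactor : (zpowersHom _ (QuotientGroup.mk' N t)).comp φ = QuotientGroup.mk' N := by
    refine MonoidHom.eq_of_eqOn_dense hgen ?_
    rintro g (rfl | hg)
    · simp [ht]
    · simpa [hS g hg] using
        ((QuotientGroup.eq_one_iff g).mpr (Subgroup.subset_normalClosure hg)).symm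
  intro g hg
  rw [← QuotientGroup.ker_mk' N, ← hfactor, MonoidHom.mem_ker, MonoidHom.comp_apply,
    MonoidHom.mem_ker.mp hg, map_one]

section WordHom

variable {X G : Type} [Group G] (f : X → G)

theorem wordHom_ofList_surjective (hf : Subgroup.closure (Set.range f) = ⊤) :
    Function.Surjective fun w : List (X ⊕ X) => wordHom f (FreeMonoid.ofList w) := by
  have hrange : MonoidHom.mrange (wordHom f) = ⊤ := by
    rw [eq_top_iff, ← Subgroup.top_toSubmonoid, ← hf, Subgroup.closure_toSubmonoid,
      Submonoid.closure_le]
    rintro _ (⟨x, rfl⟩ | ⟨x, hx⟩)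
    · exact ⟨FreeMonoid.of (Sum.inl x), by simp [wordHom]⟩
    · exact ⟨FreeMonoid.of (Sum.inr x), by simp [wordHom, hx]⟩
  intro g
  obtain ⟨w, rfl⟩ := MonoidHom.mrange_eq_top.mp hrange g
  exact ⟨w.toList, by simp⟩

def letterDegree (φ : G →* Multiplicative ℤ) : X ⊕ X → ℤ :=
  Sum.elim (fun x => (φ (f x)).toAdd) fun x => -(φ (f x)).toAdd

theorem map_wordHom_ofList (φ : G →* Multiplicative ℤ) (w : List (X ⊕ X)) :
    φ (wordHom f (FreeMonoid.ofList w)) = .ofAdd (w.map (letterDegree f φ)).sum := by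
  induction w with
  | nil => simp
  | cons l w ih =>
    rw [FreeMonoid.ofList_cons, map_mul, map_mul, ih, List.map_cons, List.sum_cons, ofAdd_add]
    rcases l with x | x <;> simp [wordHom, letterDegree]

theorem isAlgebraicSubset_ker [Finite X] (hf : Subgroup.closure (Set.range f) = ⊤)
    (φ : G →* Multiplicative ℤ) (hφ : ∀ x, |(φ (f x)).toAdd| ≤ 1) :
    IsAlgebraicSubset f φ.ker := by
  refine ⟨{w : List (X ⊕ X) | (w.map (letterDegree f φ)).sum = 0},
    Language.isContextFree_setOf_sum_map_eq_zero ?_, Set.ext fun g => ⟨?_, fun hg => ?_⟩⟩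
  · rintro (x | x) <;> simp [letterDegree, hφ]
  · rintro ⟨w, hw, rfl⟩
    simp [MonoidHom.mem_ker, map_wordHom_ofList, hw.out]
  · obtain ⟨w, rfl⟩ := wordHom_ofList_surjective f hf g
    exact ⟨w, ofAdd_eq_one.mp ((map_wordHom_ofList f φ w).symm.trans hg), rfl⟩

end WordHom

namespace BS

variable (m : ℕ)

def tExponent : PresentedGroup (BSRels m) →* Multiplicative ℤ :=
  PresentedGroup.toGroup (f := fun b => if b then 1 else .ofAdd 1) (by rintro _ rfl; simp)

@[simp]
theorem tExponent_of (b : Bool) :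
    tExponent m (PresentedGroup.of b) = if b then 1 else .ofAdd 1 :=
  PresentedGroup.toGroup.of _

theorem ker_tExponent :
    (tExponent m).ker = Subgroup.normalClosure {PresentedGroup.of true} := by
  refine (tExponent m).ker_eq_normalClosure (t := PresentedGroup.of false) ?_ (by simp) (by simp)
  rw [← PresentedGroup.closure_range_of (BSRels m)]
  congr 1
  ext g
  simp

end BS

theorem normalClosure_isAlgebraic_BS_general (m : ℕ) :
    IsAlgebraicSubset (fun b : Bool => (PresentedGroup.of b : BS m))
      ((Subgroup.normalClosure {(PresentedGroup.of true : BS m)} : Subgroup (BS m)) :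
        Set (BS m)) := by
  have h := isAlgebraicSubset_ker _ (PresentedGroup.closure_range_of _) (BS.tExponent m)
    fun b => by cases b <;> simp
  rw [BS.ker_tExponent] at h
  exact h

/-- In `BS(1, m)` with `m ≥ 1`, the normal closure of `a` is an algebraic subset,
with respect to the canonical generating map sending `true ↦ a`, `false ↦ t`. -/
theorem normalClosure_isAlgebraic_BS (m : ℕ) (hm : 1 ≤ m) :
    IsAlgebraicSubset (fun b : Bool => (PresentedGroup.of b : BS m))
      ((Subgroup.normalClosure {(PresentedGroup.of true : BS m)} : Subgroup (BS m)) :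
        Set (BS m)) :=
  normalClosure_isAlgebraic_BS_general m
end

section
/- Let G be a group generated by a finite set, let g ∈ G, and let φ be an automorphism of G. Form the semidirect product G ⋊_φ ℤ, where n ∈ ℤ acts on G by φⁿ. Then the orbit of g under the iteration of φ, {φⁿ(g) : n ∈ ℤ}, viewed inside G ⋊_φ ℤ via the canonical embedding of G, is an algebraic subset of G ⋊_φ ℤ (which is generated by the images of the generators of G together with the element t = (1, 1) ∈ G ⋊_φ ℤ, and one has t⁻ⁿ g tⁿ = φⁿ(g) for all n ∈ ℤ). -/
/-! The orbit is the image of the language `{u w ū}`, where `w` spells `g` in the generators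
of `G`, `u` is any word in `t` and `t⁻¹`, and `ū` is the reverse of `u` with `t` and `t⁻¹`
swapped: such a word evaluates to `tⁿ g t⁻ⁿ = φⁿ(g)` with `n` the exponent sum of `u`, and
every `n` occurs. This language is generated by the grammar `S → t S t⁻¹ | t⁻¹ S t | w`. -/

namespace ContextFreeRule

variable {T N : Type*} {r : ContextFreeRule T N}

lemma Rewrites.eq_map_terminal_append_output {x y : List T} {n : N} {v : List (Symbol T N)}
    (h : r.Rewrites (x.map .terminal ++ .nonterminal n :: y.map .terminal) v) :
    v = x.map .terminal ++ r.output ++ y.map .terminal := by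
  induction x generalizing v with
  | nil =>
    cases h with
    | head => rfl
    | cons _ h => simpa using h.nonterminal_input_mem
  | cons a x ih =>
    cases h with
    | cons _ h => simp [ih h]

end ContextFreeRule

namespace List

variable {α β M : Type*}

def nest (l : List (α × α)) (m : List α) : List α :=
  l.map Prod.fst ++ m ++ (l.map Prod.snd).reverse

@[simp] lemma nest_nil (m : List α) : nest [] m = m := by simp [nest]

lemma nest_cons (p : α × α) (l : List (α × α)) (m : List α) :
    nest (p :: l) m = p.1 :: nest l m ++ [p.2] := by simp [nest]

lemma nest_append_singleton (l : List (α × α)) (p : α × α) (m : List α) :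
    nest (l ++ [p]) m = nest l (p.1 :: m ++ [p.2]) := by simp [nest]

lemma map_nest (f : α → β) (l : List (α × α)) (m : List α) :
    (nest l m).map f = (l.map Prod.fst).map f ++ m.map f ++ ((l.map Prod.snd).reverse).map f := by
  simp [nest]

lemma nest_map_prodMap (f : α → β) (l : List (α × α)) (m : List β) :
    nest (l.map (Prod.map f f)) m =
      (l.map Prod.fst).map f ++ m ++ ((l.map Prod.snd).reverse).map f := by
  simp [nest, map_reverse, Function.comp_def]

lemma prod_map_nest [Group M] (ev : α → M) {l : List (α × α)}
    (hl : ∀ p ∈ l, ev p.2 = (ev p.1)⁻¹) (m : List α) :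
    ((nest l m).map ev).prod =
      (l.map (ev ∘ Prod.fst)).prod * (m.map ev).prod * (l.map (ev ∘ Prod.fst)).prod⁻¹ := by
  induction l with
  | nil => simp
  | cons p l ih =>
    rw [nest_cons]
    simp only [map_cons, map_append, prod_cons, prod_append, map_nil, prod_nil, mul_one,
      ih fun q hq => hl q (mem_cons_of_mem p hq), hl p mem_cons_self, Function.comp_apply]
    group

end List

section NestGrammar

open ContextFreeGrammar List

variable {T : Type*}

/-- An `abbrev`, so that its type of nonterminals reduces to `Unit` when sentential forms are
rewritten. -/
abbrev nestGrammar [DecidableEq T] (R : List (T × T)) (w : List T) : ContextFreeGrammar T where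
  NT := Unit
  initial := ()
  rules := (⟨(), w.map .terminal⟩ ::
    R.map fun p => ⟨(), [.terminal p.1, .nonterminal (), .terminal p.2]⟩).toFinset

namespace nestGrammar

variable [DecidableEq T] {R : List (T × T)} {w : List T}

lemma mem_rules {r : ContextFreeRule T Unit} :
    r ∈ (nestGrammar R w).rules ↔ r = ⟨(), w.map .terminal⟩ ∨
      ∃ p ∈ R, r = ⟨(), [.terminal p.1, .nonterminal (), .terminal p.2]⟩ := by
  simp [nestGrammar, eq_comm]

lemma derives_nest {l : List (T × T)} (hl : ∀ p ∈ l, p ∈ R) :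
    (nestGrammar R w).Derives [.nonterminal ()]
      (nest (l.map (Prod.map .terminal .terminal)) [.nonterminal ()]) := by
  induction l with
  | nil => exact Derives.refl _
  | cons p l ih =>
    have hp : (nestGrammar R w).Produces [.nonterminal ()]
        ([.terminal p.1] ++ [.nonterminal ()] ++ [.terminal p.2]) :=
      ⟨_, mem_rules.2 (.inr ⟨p, hl p mem_cons_self, rfl⟩),
        ContextFreeRule.Rewrites.input_output⟩
    have hl' := ((ih fun q hq => hl q (mem_cons_of_mem p hq)).append_left
      [.terminal p.1]).append_right [.terminal p.2]
    simpa [nest_cons] using hp.trans_derives hl'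

lemma exists_eq_nest_of_derives {v : List (Symbol T Unit)}
    (h : (nestGrammar R w).Derives [.nonterminal ()] v) :
    ∃ l : List (T × T), (∀ p ∈ l, p ∈ R) ∧
      (v = nest (l.map (Prod.map .terminal .terminal)) [.nonterminal ()] ∨
        v = (nest l w).map .terminal) := by
  induction h with
  | refl => exact ⟨[], by simp, .inl rfl⟩
  | tail _ huv ih =>
    obtain ⟨l, hl, rfl | rfl⟩ := ih
    · obtain ⟨r, hr, hrw⟩ := huv
      rw [nest_map_prodMap, append_assoc, singleton_append] at hrw
      rw [hrw.eq_map_terminal_append_output]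
      rcases mem_rules.1 hr with rfl | ⟨p, hp, rfl⟩
      · exact ⟨l, hl, .inr (by simp [map_nest])⟩
      · refine ⟨l ++ [p], fun q hq => ?_, .inl ?_⟩
        · rcases mem_append.1 hq with hq | hq
          · exact hl q hq
          · rwa [mem_singleton.1 hq]
        · simp [nest_append_singleton, nest_map_prodMap]
    · obtain ⟨r, -, hr⟩ := huv.exists_nonterminal_input_mem
      simp at hr

theorem language_eq :
    (nestGrammar R w).language =
      {u | ∃ l : List (T × T), (∀ p ∈ l, p ∈ R) ∧ u = nest l w} := by
  ext u
  constructor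
  · intro hu
    obtain ⟨l, hl, hv | hv⟩ := exists_eq_nest_of_derives hu
    · have : (Symbol.nonterminal () : Symbol T Unit) ∈ u.map .terminal := by
        rw [hv, nest_map_prodMap]
        simp
      simp at this
    · exact ⟨l, hl, map_injective_iff.2 (fun _ _ => Symbol.terminal.inj) hv⟩
  · rintro ⟨l, hl, rfl⟩
    have hw : (nestGrammar R w).Produces
        (nest (l.map (Prod.map .terminal .terminal)) [.nonterminal ()])
        ((nest l w).map .terminal) := by
      rw [nest_map_prodMap, map_nest]
      exact ⟨_, mem_rules.2 (.inl rfl), ContextFreeRule.rewrites_of_exists_parts _ _ _⟩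
    exact (derives_nest hl).trans_produces hw

end nestGrammar

theorem Language.isContextFree_setOf_nest (R : List (T × T)) (w : List T) :
    Language.IsContextFree
      {u | ∃ l : List (T × T), (∀ p ∈ l, p ∈ R) ∧ u = nest l w} := by
  classical
  exact ⟨nestGrammar R w, nestGrammar.language_eq⟩

end NestGrammar

section Words

open List

variable {X Y H K : Type} [Group H] [Group K]

lemma wordHom_ofList (f : X → H) (u : List (X ⊕ X)) :
    wordHom f (FreeMonoid.ofList u) = (u.map (Sum.elim f fun x => (f x)⁻¹)).prod :=
  FreeMonoid.lift_ofList _ _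

lemma mrange_wordHom (f : X → H) :
    MonoidHom.mrange (wordHom f) = (Subgroup.closure (Set.range f)).toSubmonoid := by
  rw [wordHom, FreeMonoid.mrange_lift, Subgroup.closure_toSubmonoid, Set.Sum.elim_range,
    Set.inv_range]

lemma wordHom_comp_map {f : X → H} {f' : Y → K} {σ : X → Y} {ψ : H →* K}
    (h : ∀ x, f' (σ x) = ψ (f x)) :
    (wordHom f').comp (FreeMonoid.map (Sum.map σ σ)) = ψ.comp (wordHom f) :=
  FreeMonoid.hom_eq fun x => by cases x <;> simp [wordHom, h]

lemma map_mem_mrange_wordHom {f : X → H} {f' : Y → K} (σ : X → Y) (ψ : H →* K)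
    (h : ∀ x, f' (σ x) = ψ (f x)) {g : H} (hg : g ∈ MonoidHom.mrange (wordHom f)) :
    ψ g ∈ MonoidHom.mrange (wordHom f') := by
  obtain ⟨w, rfl⟩ := hg
  exact ⟨FreeMonoid.map (Sum.map σ σ) w, DFunLike.congr_fun (wordHom_comp_map h) w⟩

def inversePairs (y : X) : List ((X ⊕ X) × (X ⊕ X)) := [(.inl y, .inr y), (.inr y, .inl y)]

lemma wordHom_ofList_nest (f : X → H) {y : X} {l : List ((X ⊕ X) × (X ⊕ X))}
    (hl : ∀ p ∈ l, p ∈ inversePairs y) (u : List (X ⊕ X)) :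
    wordHom f (FreeMonoid.ofList (nest l u)) =
      (l.map ((Sum.elim f fun x => (f x)⁻¹) ∘ Prod.fst)).prod *
        wordHom f (FreeMonoid.ofList u) *
          (l.map ((Sum.elim f fun x => (f x)⁻¹) ∘ Prod.fst)).prod⁻¹ := by
  rw [wordHom_ofList, prod_map_nest, ← wordHom_ofList]
  intro p hp
  rcases mem_pair.1 (hl p hp) with rfl | rfl <;> simp

lemma exists_prod_map_inversePairs_iff (f : X → H) (y : X) {c : H} :
    (∃ l : List ((X ⊕ X) × (X ⊕ X)), (∀ p ∈ l, p ∈ inversePairs y) ∧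
      (l.map ((Sum.elim f fun x => (f x)⁻¹) ∘ Prod.fst)).prod = c) ↔
        c ∈ Subgroup.zpowers (f y) := by
  constructor
  · rintro ⟨l, hl, rfl⟩
    refine (Subgroup.zpowers (f y)).list_prod_mem fun z hz => ?_
    obtain ⟨p, hp, rfl⟩ := mem_map.1 hz
    rcases mem_pair.1 (hl p hp) with rfl | rfl
    · exact Subgroup.mem_zpowers _
    · exact inv_mem (Subgroup.mem_zpowers _)
  · rintro ⟨n, rfl⟩
    obtain ⟨k, rfl | rfl⟩ := Int.eq_nat_or_neg n
    · exact ⟨replicate k (.inl y, .inr y),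
        fun p hp => by simp [eq_of_mem_replicate hp, inversePairs], by simp⟩
    · exact ⟨replicate k (.inr y, .inl y),
        fun p hp => by simp [eq_of_mem_replicate hp, inversePairs], by simp⟩

theorem isAlgebraicSubset_range_zpow_mul_mul_inv (f : X → H) (y : X) {h : H}
    (hh : h ∈ MonoidHom.mrange (wordHom f)) :
    IsAlgebraicSubset f (Set.range fun n : ℤ => f y ^ n * h * (f y ^ n)⁻¹) := by
  obtain ⟨w, rfl⟩ := hh
  refine ⟨_, Language.isContextFree_setOf_nest (inversePairs y) w.toList, ?_⟩
  ext x
  constructor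
  · rintro ⟨_, ⟨l, hl, rfl⟩, rfl⟩
    obtain ⟨n, hn⟩ := (exists_prod_map_inversePairs_iff f y).1 ⟨l, hl, rfl⟩
    exact ⟨n, by simp only [wordHom_ofList_nest f hl, FreeMonoid.ofList_toList, hn]⟩
  · rintro ⟨n, rfl⟩
    obtain ⟨l, hl, hn⟩ :=
      (exists_prod_map_inversePairs_iff f y).2 (Subgroup.zpow_mem_zpowers _ n)
    exact ⟨_, ⟨l, hl, rfl⟩,
      by simp only [wordHom_ofList_nest f hl, FreeMonoid.ofList_toList, hn]⟩

end Words

theorem SemidirectProduct.inr_ofAdd_one_zpow_mul_inl_mul_inv {G : Type*} [Group G]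
    (φ : MulAut G) (g : G) (n : ℤ) :
    (inr (Multiplicative.ofAdd 1) : G ⋊[zpowersHom (MulAut G) φ] Multiplicative ℤ) ^ n * inl g *
      (inr (Multiplicative.ofAdd 1) ^ n)⁻¹ = inl ((φ ^ n) g) := by
  rw [← map_zpow, ← ofAdd_zsmul, smul_eq_mul, mul_one, ← map_inv, ← inl_aut, zpowersHom_apply,
    toAdd_ofAdd]

theorem orbit_isAlgebraic_semidirect_general {X G : Type} [Group G] (f : X → G)
    (hgen : Subgroup.closure (Set.range f) = ⊤)
    (g : G) (φ : MulAut G) :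
    IsAlgebraicSubset
      (Sum.elim
        (fun y : X =>
          (SemidirectProduct.inl (f y) : G ⋊[zpowersHom (MulAut G) φ] Multiplicative ℤ))
        (fun _ : Unit =>
          (SemidirectProduct.inr (Multiplicative.ofAdd (1 : ℤ)) :
            G ⋊[zpowersHom (MulAut G) φ] Multiplicative ℤ)))
      (SemidirectProduct.inl '' (Set.range fun n : ℤ => (φ ^ n) g)) := by
  have hg : g ∈ MonoidHom.mrange (wordHom f) := by
    rw [mrange_wordHom, hgen]
    exact Subgroup.mem_top g
  rw [← Set.range_comp, show (SemidirectProduct.inl ∘ fun n : ℤ => (φ ^ n) g) = _ from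
    funext fun n => (SemidirectProduct.inr_ofAdd_one_zpow_mul_inl_mul_inv φ g n).symm]
  exact isAlgebraicSubset_range_zpow_mul_mul_inv _ (Sum.inr ())
    (map_mem_mrange_wordHom Sum.inl SemidirectProduct.inl (fun _ => by rfl) hg)

/-- Let `G` be a group generated by a finite set (given by `f : X → G`), `g ∈ G` and
`φ` an automorphism of `G`. In the semidirect product `G ⋊_φ ℤ` (where `n ∈ ℤ` acts on
`G` by `φⁿ`, the integers being written multiplicatively as `Multiplicative ℤ`), the
orbit `{φⁿ(g) : n ∈ ℤ}` of `g` under the iteration of `φ`, viewed inside `G ⋊_φ ℤ` via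
the canonical embedding of `G`, is an algebraic subset of `G ⋊_φ ℤ` with respect to the
finite generating set consisting of the images of the generators of `G` together with
the element `t = (1, 1)`. -/
theorem orbit_isAlgebraic_semidirect {X G : Type} [Fintype X] [Group G] (f : X → G)
    (hgen : Subgroup.closure (Set.range f) = ⊤)
    (g : G) (φ : MulAut G) :
    IsAlgebraicSubset
      (Sum.elim
        (fun y : X =>
          (SemidirectProduct.inl (f y) : G ⋊[zpowersHom (MulAut G) φ] Multiplicative ℤ))
        (fun _ : Unit =>
          (SemidirectProduct.inr (Multiplicative.ofAdd (1 : ℤ)) :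
            G ⋊[zpowersHom (MulAut G) φ] Multiplicative ℤ)))
      (SemidirectProduct.inl '' (Set.range fun n : ℤ => (φ ^ n) g)) :=
  orbit_isAlgebraic_semidirect_general f hgen g φ
end
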